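/- Let T₀, T₁ : ℝ → ℝ be given by T₀(x) = x/2 and T₁(x) = (3x+1)/2. For every real number x₀ > 0, the forward orbit O⁺(x₀) = { T_{i₁} ∘ ⋯ ∘ T_{iₙ}(x₀) : n ≥ 1, each i_k ∈ {0,1} } of x₀ under the semigroup generated by T₀ and T₁ is dense in the interval (0, ∞). -/

import Mathlib

/-!
The orbit contains the points `T₀ⁿ T₁ᵐ x₀ = (3/2)ᵐ / 2ⁿ · (x₀ + 1) - 1 / 2ⁿ`. Since
`log₂ (3/2) = log₂ 3 - 1` is irrational, the rotation by it on `ℝ/ℤ` is minimal; taking `m` large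
in `m log₂ (3/2) - n` forces `n` large, so the numbers `(3/2)ᵐ / 2ⁿ` with `n ≥ N` are dense in
`(0, ∞)` for every `N`, while the error term `1 / 2ⁿ` is at most `1 / 2ᴺ`.
-/

open Filter Set Topology

/-- Apply the composition T_{i₁} ∘ ⋯ ∘ T_{iₙ} to x, where `false` stands for
T₀(x) = x/2 and `true` stands for T₁(x) = (3x+1)/2, and the list is
[i₁, …, iₙ]. -/
noncomputable def applyWord (l : List Bool) (x : ℝ) : ℝ :=
  l.foldr (fun b y => if b then (3 * y + 1) / 2 else y / 2) x

theorem irrational_logb_two_three : Irrational (Real.logb 2 3) := by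
  rintro ⟨q, hq⟩
  have hq0 : 0 < q := by
    have : 0 < Real.logb 2 3 := Real.logb_pos one_lt_two (by norm_num)
    exact_mod_cast hq ▸ this
  have hpow : (2 : ℝ) ^ q.num = 3 ^ q.den := by
    rw [← Real.rpow_intCast, ← div_mul_cancel₀ (q.num : ℝ) (Nat.cast_ne_zero.2 q.den_nz),
      Real.rpow_mul zero_le_two, ← Rat.cast_def, hq, Real.rpow_logb] <;> norm_num
  obtain ⟨k, hk⟩ := Int.eq_ofNat_of_zero_le (Rat.num_pos.2 hq0).le
  have hk0 : k ≠ 0 := by rintro rfl; simp [Rat.num_pos.2 hq0 |>.ne'] at hk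
  rw [hk, zpow_natCast] at hpow
  have hnat : 2 ^ k = 3 ^ q.den := by exact_mod_cast hpow
  have h3 : Even (3 ^ q.den) := hnat ▸ Nat.even_pow.2 ⟨even_two, hk0⟩
  exact absurd (Nat.even_pow.1 h3).1 (by decide)

theorem irrational_logb_two_three_halves : Irrational (Real.logb 2 (3 / 2)) := by
  rw [Real.logb_div three_ne_zero two_ne_zero, Real.logb_self_eq_one one_lt_two]
  exact_mod_cast irrational_logb_two_three.sub_natCast 1

theorem Irrational.frequently_exists_nat_mul_sub_int_mem {ξ : ℝ} (hξ : Irrational ξ) {s : Set ℝ}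
    (hs : IsOpen s) {x : ℝ} (hx : x ∈ s) : ∃ᶠ m : ℕ in atTop, ∃ k : ℤ, m * ξ - k ∈ s := by
  have hdense : DenseRange fun m : ℕ => m • (ξ : AddCircle (1 : ℝ)) := by
    rw [← denseRange_zsmul_iff_nsmul, AddCircle.denseRange_zsmul_coe_iff, div_one]
    exact hξ
  have hcluster :
      MapClusterPt (x : AddCircle (1 : ℝ)) atTop fun m : ℕ => m • (ξ : AddCircle (1 : ℝ)) :=
    ((mapClusterPt_atTop_nsmul_tfae _ _).out 0 2).2 (hdense _)
  refine (mapClusterPt_iff_frequently.1 hcluster _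
    ((QuotientAddGroup.isOpenMap_coe _ hs).mem_nhds ⟨x, hx, rfl⟩)).mono ?_
  rintro m ⟨r, hr, hrm⟩
  obtain ⟨k, hk⟩ := (AddCircle.coe_eq_zero_iff (1 : ℝ)).1
    (show ((m * ξ - r : ℝ) : AddCircle (1 : ℝ)) = 0 by
      rw [AddCircle.coe_sub, ← nsmul_eq_mul, AddCircle.coe_nsmul, hrm, sub_self])
  refine ⟨k, ?_⟩
  rw [zsmul_eq_mul, mul_one] at hk
  rwa [hk, sub_sub_cancel]

theorem Irrational.dense_nat_mul_sub_nat {ξ : ℝ} (hξ : Irrational ξ) (hξ0 : 0 < ξ) (N : ℕ) :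
    Dense {x : ℝ | ∃ m n : ℕ, N ≤ n ∧ m * ξ - n = x} := by
  refine Metric.dense_iff.2 fun x r hr => ?_
  have hlarge : ∀ᶠ m : ℕ in atTop, x + r + N ≤ m * ξ :=
    (tendsto_natCast_atTop_atTop.atTop_mul_const hξ0).eventually_ge_atTop _
  obtain ⟨m, ⟨k, hk⟩, hm⟩ :=
    ((hξ.frequently_exists_nat_mul_sub_int_mem Metric.isOpen_ball
      (Metric.mem_ball_self hr)).and_eventually hlarge).exists
  have hNk : (N : ℤ) ≤ k := by
    have := (abs_lt.1 (mem_ball_iff_norm.1 hk)).2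
    exact_mod_cast (show (N : ℝ) ≤ k by linarith)
  lift k to ℕ using (Nat.cast_nonneg N).trans hNk
  exact ⟨_, hk, m, k, by exact_mod_cast hNk, by push_cast; rfl⟩

theorem Ioi_subset_closure_pow_div_pow {a b : ℝ} (ha : 1 < a) (hb : 1 < b)
    (hab : Irrational (Real.logb b a)) (N : ℕ) :
    Ioi 0 ⊆ closure {z : ℝ | ∃ m n : ℕ, N ≤ n ∧ a ^ m / b ^ n = z} := by
  intro z hz
  have hb0 : 0 < b := zero_lt_one.trans hb
  have hcont : Continuous fun t : ℝ => b ^ t :=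
    continuous_const.rpow continuous_id fun _ => Or.inl hb0.ne'
  have hdense := hab.dense_nat_mul_sub_nat (Real.logb_pos hb ha) N
  rw [← Real.rpow_logb hb0 hb.ne' hz]
  refine closure_mono ?_ <| image_closure_subset_closure_image hcont
    ⟨_, hdense.closure_eq ▸ mem_univ (Real.logb b z), rfl⟩
  rintro _ ⟨_, ⟨m, n, hn, rfl⟩, rfl⟩
  refine ⟨m, n, hn, ?_⟩
  dsimp only
  rw [Real.rpow_sub hb0, mul_comm, Real.rpow_mul hb0.le,
    Real.rpow_logb hb0 hb.ne' (zero_lt_one.trans ha), Real.rpow_natCast, Real.rpow_natCast]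

theorem applyWord_append (l₁ l₂ : List Bool) (x : ℝ) :
    applyWord (l₁ ++ l₂) x = applyWord l₁ (applyWord l₂ x) :=
  List.foldr_append

theorem applyWord_replicate_false (n : ℕ) (x : ℝ) :
    applyWord (List.replicate n false) x = x / 2 ^ n := by
  induction n with
  | zero => simp [applyWord]
  | succ n ih =>
    rw [List.replicate_succ, ← List.singleton_append, applyWord_append, ih]
    simp only [applyWord, List.foldr_cons, List.foldr_nil, Bool.false_eq_true, ite_false]
    ring

theorem applyWord_replicate_true (m : ℕ) (x : ℝ) :
    applyWord (List.replicate m true) x = (3 / 2) ^ m * (x + 1) - 1 := by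
  induction m with
  | zero => simp [applyWord]
  | succ m ih =>
    rw [List.replicate_succ, ← List.singleton_append, applyWord_append, ih]
    simp only [applyWord, List.foldr_cons, List.foldr_nil, ite_true]
    ring

theorem applyWord_replicate_false_append_replicate_true (n m : ℕ) (x : ℝ) :
    applyWord (List.replicate n false ++ List.replicate m true) x =
      (3 / 2) ^ m / 2 ^ n * (x + 1) - 1 / 2 ^ n := by
  rw [applyWord_append, applyWord_replicate_false, applyWord_replicate_true]
  ring

/-- (Misiurewicz–Rodrigues, 2005) For every x₀ > 0, the forward orbit of x₀
under the semigroup generated by T₀(x) = x/2 and T₁(x) = (3x+1)/2 is dense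
in (0, ∞). -/
theorem orbit_dense_in_positive_reals (x₀ : ℝ) (hx₀ : 0 < x₀) :
    Set.Ioi (0 : ℝ) ⊆
      closure {y : ℝ | ∃ l : List Bool, l ≠ [] ∧ applyWord l x₀ = y} := by
  intro y hy
  refine Metric.mem_closure_iff.2 fun ε hε => ?_
  set c := x₀ + 1
  have hc : 0 < c := by positivity
  obtain ⟨N, hN, hN1⟩ : ∃ N : ℕ, (1 / 2 : ℝ) ^ N < ε / 2 ∧ 1 ≤ N :=
    (((tendsto_pow_atTop_nhds_zero_of_lt_one (by norm_num) (by norm_num)).eventually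
      (gt_mem_nhds (half_pos hε))).and (eventually_ge_atTop 1)).exists
  obtain ⟨_, ⟨m, n, hn, rfl⟩, hz⟩ := Metric.mem_closure_iff.1
    (Ioi_subset_closure_pow_div_pow (by norm_num) one_lt_two irrational_logb_two_three_halves N
      (div_pos hy hc)) (ε / 2 / c) (by positivity)
  have hword : List.replicate n false ++ List.replicate m true ≠ [] :=
    List.append_ne_nil_of_left_ne_nil (mt (List.replicate_eq_nil_iff _).1 (by omega)) _
  refine ⟨_, ⟨_, hword, rfl⟩, ?_⟩
  have hscale : |y - c * ((3 / 2) ^ m / 2 ^ n)| < ε / 2 := by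
    rwa [Real.dist_eq, div_sub' hc.ne', abs_div, abs_of_pos hc,
      div_lt_div_iff_of_pos_right hc] at hz
  have htail : (1 / 2 : ℝ) ^ n < ε / 2 :=
    (pow_le_pow_of_le_one (by norm_num) (by norm_num) hn).trans_lt hN
  have htail_pos : 0 < (1 / 2 : ℝ) ^ n := by positivity
  rw [applyWord_replicate_false_append_replicate_true, Real.dist_eq, ← one_div_pow]
  rw [abs_sub_lt_iff] at hscale ⊢
  constructor <;> linarith
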